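/- Let R be a ring, let N and M be ℤ-indexed chain complexes of R-modules, let (f, g, φ) be a contraction from N to M, and let δ be a perturbation of N that is pointwise nilpotent with respect to φ. Define Σx = Σ_{i≥0} (−1)^i (φδ)^i x, f_δ = f ∘ (id − δ ∘ Σ ∘ φ), g_δ = Σ ∘ g, and φ_δ = Σ ∘ φ. Then g_δ ∘ f_δ + φ_δ ∘ (∂_N + δ) + (∂_N + δ) ∘ φ_δ = id_N. -/

import Mathlib

/-!
Pointwise nilpotence of `φ ∘ δ` makes `S` a truncated alternating geometric series at every
point, so `S` is a two-sided inverse of `1 + φ ∘ δ`. The perturbed identity is then a formal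
consequence, in the ring of endomorphisms of `N`, of this, of `g f + φ ∂ + ∂ φ = 1`, `∂² = 0`
and `(∂ + δ)² = 0`.
-/

/-- A contraction between ℤ-graded chain complexes of `R`-modules, presented via total
modules `N` and `M` with internal ℤ-gradings `𝒩`, `ℳ`, differentials `dN`, `dM` of
degree `-1` squaring to zero, chain maps `f : N → M`, `g : M → N` of degree `0`, and a
homotopy operator `φ : N → N` of degree `+1`, satisfying
`f ∘ g = id`, `g ∘ f + φ ∘ dN + dN ∘ φ = id`, `f ∘ φ = 0`, `φ ∘ g = 0`, `φ ∘ φ = 0`. -/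
structure Contraction (R : Type) [Ring R]
    (N : Type) [AddCommGroup N] [Module R N]
    (M : Type) [AddCommGroup M] [Module R M]
    (𝒩 : ℤ → Submodule R N) (ℳ : ℤ → Submodule R M)
    (dN : N →ₗ[R] N) (dM : M →ₗ[R] M)
    (f : N →ₗ[R] M) (g : M →ₗ[R] N) (φ : N →ₗ[R] N) : Prop where
  gradedN : DirectSum.IsInternal 𝒩
  gradedM : DirectSum.IsInternal ℳ
  dN_deg : ∀ i : ℤ, ∀ x ∈ 𝒩 i, dN x ∈ 𝒩 (i - 1)
  dM_deg : ∀ i : ℤ, ∀ x ∈ ℳ i, dM x ∈ ℳ (i - 1)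
  dN_sq : dN ∘ₗ dN = 0
  dM_sq : dM ∘ₗ dM = 0
  f_deg : ∀ i : ℤ, ∀ x ∈ 𝒩 i, f x ∈ ℳ i
  g_deg : ∀ i : ℤ, ∀ x ∈ ℳ i, g x ∈ 𝒩 i
  φ_deg : ∀ i : ℤ, ∀ x ∈ 𝒩 i, φ x ∈ 𝒩 (i + 1)
  f_chain : dM ∘ₗ f = f ∘ₗ dN
  g_chain : dN ∘ₗ g = g ∘ₗ dM
  fg : f ∘ₗ g = LinearMap.id
  homotopy : g ∘ₗ f + φ ∘ₗ dN + dN ∘ₗ φ = LinearMap.id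
  fφ : f ∘ₗ φ = 0
  φg : φ ∘ₗ g = 0
  φφ : φ ∘ₗ φ = 0

open Finset

section AlternatingGeomSum

variable {R N : Type*} [Semiring R] [AddCommGroup N] [Module R N]

theorem Module.End.neg_pow_apply (a : Module.End R N) (i : ℕ) (x : N) :
    ((-a) ^ i) x = (-1 : ℤ) ^ i • (a ^ i) x := by
  rw [neg_pow, Module.End.mul_apply, ← Module.End.intCast_apply (R := R)]
  push_cast
  rfl

variable {a S : Module.End R N}

theorem Module.End.apply_eq_geom_sum_neg_apply
    (hS : ∀ (x : N) (m : ℕ), (a ^ m) x = 0 → S x = ∑ i ∈ range m, (-1 : ℤ) ^ i • (a ^ i) x)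
    {x : N} {m : ℕ} (hm : (a ^ m) x = 0) : S x = (∑ i ∈ range m, (-a) ^ i) x := by
  simp only [hS x m hm, LinearMap.sum_apply, Module.End.neg_pow_apply]

theorem Module.End.neg_pow_apply_eq_zero {x : N} {m : ℕ} (hm : (a ^ m) x = 0) :
    ((-a) ^ m) x = 0 := by
  rw [Module.End.neg_pow_apply, hm, smul_zero]

theorem Module.End.one_add_mul_eq_one_of_apply_eq_alternating_sum
    (hnil : ∀ x : N, ∃ m : ℕ, (a ^ m) x = 0)
    (hS : ∀ (x : N) (m : ℕ), (a ^ m) x = 0 → S x = ∑ i ∈ range m, (-1 : ℤ) ^ i • (a ^ i) x) :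
    (1 + a) * S = 1 := by
  ext x
  obtain ⟨m, hm⟩ := hnil x
  have hgeom := mul_neg_geom_sum (-a) m
  rw [sub_neg_eq_add] at hgeom
  rw [Module.End.mul_apply, Module.End.apply_eq_geom_sum_neg_apply hS hm, ← Module.End.mul_apply,
    hgeom, LinearMap.sub_apply, Module.End.neg_pow_apply_eq_zero hm, sub_zero]

theorem Module.End.mul_one_add_eq_one_of_apply_eq_alternating_sum
    (hnil : ∀ x : N, ∃ m : ℕ, (a ^ m) x = 0)
    (hS : ∀ (x : N) (m : ℕ), (a ^ m) x = 0 → S x = ∑ i ∈ range m, (-1 : ℤ) ^ i • (a ^ i) x) :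
    S * (1 + a) = 1 := by
  ext x
  obtain ⟨m, hm⟩ := hnil x
  have hm' : (a ^ m) ((1 + a) x) = 0 := by
    rw [← Module.End.mul_apply, ← (((Commute.one_left a).add_left (.refl a)).pow_right m).eq,
      Module.End.mul_apply, hm, map_zero]
  have hgeom := geom_sum_mul_neg (-a) m
  rw [sub_neg_eq_add] at hgeom
  rw [Module.End.mul_apply, Module.End.apply_eq_geom_sum_neg_apply hS hm', ← Module.End.mul_apply,
    hgeom, LinearMap.sub_apply, Module.End.neg_pow_apply_eq_zero hm, sub_zero]

end AlternatingGeomSum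

theorem perturbed_homotopy_eq_one_of_inverse {A : Type*} [Ring A] {s gf φ d δ : A}
    (hs_left : s * (1 + φ * δ) = 1) (hs_right : (1 + φ * δ) * s = 1)
    (hhomotopy : gf + φ * d + d * φ = 1) (hd : d * d = 0) (hpert : (d + δ) * (d + δ) = 0) :
    s * gf * (1 - δ * (s * φ)) + s * φ * (d + δ) + (d + δ) * (s * φ) = 1 := by
  rw [← sub_eq_zero] at hs_left hs_right hhomotopy ⊢
  have key : s * gf * (1 - δ * (s * φ)) + s * φ * (d + δ) + (d + δ) * (s * φ) - 1
      = s * (gf + φ * d + d * φ - 1) * (1 - δ * s * φ) + s * d * ((1 + φ * δ) * s - 1) * φ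
        + s * φ * ((d + δ) * (d + δ) - d * d) * s * φ
        - (s * (1 + φ * δ) - 1) * (d + δ) * s * φ + (s * (1 + φ * δ) - 1) := by
    noncomm_ring
  rw [key, hs_left, hs_right, hhomotopy, hd, hpert]
  noncomm_ring

theorem perturbed_homotopy_identity_general
    (R : Type) [Ring R]
    (N : Type) [AddCommGroup N] [Module R N]
    (M : Type) [AddCommGroup M] [Module R M]
    (𝒩 : ℤ → Submodule R N) (ℳ : ℤ → Submodule R M)
    (dN : N →ₗ[R] N) (dM : M →ₗ[R] M)
    (f : N →ₗ[R] M) (g : M →ₗ[R] N) (φ : N →ₗ[R] N)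
    (hc : Contraction R N M 𝒩 ℳ dN dM f g φ)
    (δ : N →ₗ[R] N)
    (δ_pert : (dN + δ) ∘ₗ (dN + δ) = 0)
    (δ_nil : ∀ x : N, ∃ m : ℕ, ((φ ∘ₗ δ) ^ m) x = 0)
    (S : N →ₗ[R] N)
    (hS : ∀ (x : N) (m : ℕ), ((φ ∘ₗ δ) ^ m) x = 0 →
      S x = ∑ i ∈ Finset.range m, ((-1 : ℤ) ^ i) • (((φ ∘ₗ δ) ^ i) x)) :
    (S ∘ₗ g) ∘ₗ (f ∘ₗ (LinearMap.id - δ ∘ₗ S ∘ₗ φ))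
      + (S ∘ₗ φ) ∘ₗ (dN + δ) + (dN + δ) ∘ₗ (S ∘ₗ φ) = LinearMap.id :=
  perturbed_homotopy_eq_one_of_inverse (gf := g ∘ₗ f)
    (Module.End.mul_one_add_eq_one_of_apply_eq_alternating_sum δ_nil hS)
    (Module.End.one_add_mul_eq_one_of_apply_eq_alternating_sum δ_nil hS)
    hc.homotopy hc.dN_sq δ_pert

/-- The perturbed homotopy identity: `g_δ ∘ f_δ + φ_δ ∘ (dN + δ) + (dN + δ) ∘ φ_δ = id_N`,
where `f_δ = f ∘ (id - δ ∘ S ∘ φ)`, `g_δ = S ∘ g` and `φ_δ = S ∘ φ`. -/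
theorem perturbed_homotopy_identity
    (R : Type) [Ring R]
    (N : Type) [AddCommGroup N] [Module R N]
    (M : Type) [AddCommGroup M] [Module R M]
    (𝒩 : ℤ → Submodule R N) (ℳ : ℤ → Submodule R M)
    (dN : N →ₗ[R] N) (dM : M →ₗ[R] M)
    (f : N →ₗ[R] M) (g : M →ₗ[R] N) (φ : N →ₗ[R] N)
    (hc : Contraction R N M 𝒩 ℳ dN dM f g φ)
    (δ : N →ₗ[R] N)
    (δ_deg : ∀ i : ℤ, ∀ x ∈ 𝒩 i, δ x ∈ 𝒩 (i - 1))
    (δ_pert : (dN + δ) ∘ₗ (dN + δ) = 0)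
    (δ_nil : ∀ x : N, ∃ m : ℕ, ((φ ∘ₗ δ) ^ m) x = 0)
    (S : N →ₗ[R] N)
    (hS : ∀ (x : N) (m : ℕ), ((φ ∘ₗ δ) ^ m) x = 0 →
      S x = ∑ i ∈ Finset.range m, ((-1 : ℤ) ^ i) • (((φ ∘ₗ δ) ^ i) x)) :
    (S ∘ₗ g) ∘ₗ (f ∘ₗ (LinearMap.id - δ ∘ₗ S ∘ₗ φ))
      + (S ∘ₗ φ) ∘ₗ (dN + δ) + (dN + δ) ∘ₗ (S ∘ₗ φ) = LinearMap.id :=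
  perturbed_homotopy_identity_general R N M 𝒩 ℳ dN dM f g φ hc δ δ_pert δ_nil S hS
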